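/- Let I=⟨A,∅,R,R?⟩ be an AtIAF, S⊆A a set of arguments, w∉A a fresh argument, and I'=⟨A, {w}, R, R?∪{(w,w)}⟩. Then NecVer_pr(I,S)=true if and only if (w,w)∈SRE⁻(I'+{w}, S, (pr,false)). -/
import Mathlib


universe u

/-- An abstract argumentation framework: a set of arguments with an attack relation. -/
structure AF (α : Type u) where
  args : Set α
  att : Set (α × α)

namespace AF

variable {α : Type u}

/-- `S⁺_F`: arguments attacked by `S`. -/
def plusSet (F : AF α) (S : Set α) : Set α := {a | a ∈ F.args ∧ ∃ b ∈ S, (b, a) ∈ F.att}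

/-- `S⁻_F`: arguments attacking `S`. -/
def minusSet (F : AF α) (S : Set α) : Set α := {a | a ∈ F.args ∧ ∃ b ∈ S, (a, b) ∈ F.att}

/-- `S` is conflict-free in `F`. -/
def confFree (F : AF α) (S : Set α) : Prop := S ∩ F.plusSet S = ∅

/-- `S` defends `a` in `F`: every attacker of `a` is attacked by `S`. -/
def defends (F : AF α) (S : Set α) (a : α) : Prop := ∀ b, (b, a) ∈ F.att → b ∈ F.plusSet S

/-- The characteristic function `Γ_F(S)`: arguments defended by `S`. -/
def Γ (F : AF α) (S : Set α) : Set α := {a | a ∈ F.args ∧ F.defends S a}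

/-- Admissible: conflict-free and self-defending. -/
def isAd (F : AF α) (S : Set α) : Prop := S ⊆ F.args ∧ F.confFree S ∧ S ⊆ F.Γ S

/-- Stable: conflict-free and attacking exactly the outside. -/
def isSt (F : AF α) (S : Set α) : Prop := S ⊆ F.args ∧ F.confFree S ∧ F.plusSet S = F.args \ S

/-- Complete: admissible and containing all defended arguments. -/
def isCo (F : AF α) (S : Set α) : Prop := F.isAd S ∧ F.Γ S ⊆ S

/-- Grounded: ⊆-minimal complete. -/
def isGr (F : AF α) (S : Set α) : Prop := F.isCo S ∧ ∀ T, F.isCo T → T ⊆ S → T = S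

/-- Preferred: ⊆-maximal admissible. -/
def isPr (F : AF α) (S : Set α) : Prop := F.isAd S ∧ ∀ T, F.isAd T → S ⊆ T → S = T

end AF

/-- The five common semantics. -/
inductive Sem : Type
  | ad | st | co | gr | pr
deriving DecidableEq

/-- `S` is a `σ`-extension of `F`. -/
def extOf {α : Type u} : Sem → AF α → Set α → Prop
  | .ad => AF.isAd
  | .st => AF.isSt
  | .co => AF.isCo
  | .gr => AF.isGr
  | .pr => AF.isPr

/-- An incomplete argumentation framework (data part). -/
structure IAF (α : Type u) where
  A : Set α
  Aq : Set α
  R : Set (α × α)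
  Rq : Set (α × α)

namespace IAF

variable {α : Type u}

/-- Well-formedness: `A`,`A?` disjoint; `R`,`R?` disjoint subsets of `(A∪A?)×(A∪A?)`. -/
def WF (I : IAF α) : Prop :=
  Disjoint I.A I.Aq ∧ Disjoint I.R I.Rq ∧
  I.R ⊆ (I.A ∪ I.Aq) ×ˢ (I.A ∪ I.Aq) ∧
  I.Rq ⊆ (I.A ∪ I.Aq) ×ˢ (I.A ∪ I.Aq)

/-- `cert(I)`: the AF projected on the certain part. -/
def cert (I : IAF α) : AF α := ⟨I.A, I.R ∩ I.A ×ˢ I.A⟩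

/-- `I'` is a partial completion of `I`. -/
def PartOf (I' I : IAF α) : Prop :=
  I'.WF ∧ I.A ⊆ I'.A ∧ I'.A ⊆ I.A ∪ I.Aq ∧
  I.R ∩ (I'.A ∪ I'.Aq) ×ˢ (I'.A ∪ I'.Aq) ⊆ I'.R ∧
  I'.R ⊆ I.R ∪ I.Rq ∧ I'.Aq ⊆ I.Aq ∧ I'.Rq ⊆ I.Rq

/-- `F` is a completion of `I`. -/
def IsCompletion (I : IAF α) (F : AF α) : Prop := ∃ I' : IAF α, I'.PartOf I ∧ F = I'.cert

/-- `I + R₀` for a set of uncertain attacks. -/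
def addR (I : IAF α) (R0 : Set (α × α)) : IAF α := ⟨I.A, I.Aq, I.R ∪ R0, I.Rq \ R0⟩

/-- `I − R₀` for a set of uncertain attacks. -/
def subR (I : IAF α) (R0 : Set (α × α)) : IAF α := ⟨I.A, I.Aq, I.R, I.Rq \ R0⟩

/-- `I + A₀` for a set of uncertain arguments. -/
def addA (I : IAF α) (A0 : Set α) : IAF α := ⟨I.A ∪ A0, I.Aq \ A0, I.R, I.Rq⟩

/-- `I − A₀` for a set of uncertain arguments. -/
def subA (I : IAF α) (A0 : Set α) : IAF α :=
  ⟨I.A, I.Aq \ A0,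
   I.R \ {p | p ∈ I.R ∪ I.Rq ∧ (p.1 ∈ A0 ∨ p.2 ∈ A0)},
   I.Rq \ {p | p ∈ I.R ∪ I.Rq ∧ (p.1 ∈ A0 ∨ p.2 ∈ A0)}⟩

/-- `S⁺_I`. -/
def plusI (I : IAF α) (S : Set α) : Set α := {a | a ∈ I.A ∪ I.Aq ∧ ∃ b ∈ S, (b, a) ∈ I.R}

/-- `S⁻_I`. -/
def minusI (I : IAF α) (S : Set α) : Set α := {a | a ∈ I.A ∪ I.Aq ∧ ∃ b ∈ S, (a, b) ∈ I.R}

/-- `S^∼_I`. -/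
def simI (I : IAF α) (S : Set α) : Set α :=
  {a | a ∈ I.A ∪ I.Aq ∧ ∀ b ∈ S, (b, a) ∉ I.R ∪ I.Rq}

end IAF

/-- An element of an IAF: either an argument or an attack. -/
inductive Elem (α : Type u) : Type u
  | arg (a : α)
  | att (r : α × α)

/-- `e` is an uncertain element of `I`, i.e. `e ∈ A? ∪ R?`. -/
def IAF.isUnc {α : Type u} (I : IAF α) : Elem α → Prop
  | .arg a => a ∈ I.Aq
  | .att r => r ∈ I.Rq

/-- `I + {e}`. -/
def IAF.addE {α : Type u} (I : IAF α) : Elem α → IAF α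
  | .arg a => I.addA {a}
  | .att r => I.addR {r}

/-- `I − {e}`. -/
def IAF.subE {α : Type u} (I : IAF α) : Elem α → IAF α
  | .arg a => I.subA {a}
  | .att r => I.subR {r}

/-- `e` is the unique uncertain element of `I`, i.e. `A? ∪ R? = {e}`. -/
def onlyUnc {α : Type u} (I : IAF α) : Elem α → Prop
  | .arg a => I.Aq = {a} ∧ I.Rq = ∅
  | .att r => I.Aq = ∅ ∧ I.Rq = {r}

/-- A verification status: a semantics together with true/false. -/
abbrev VStatus := Sem × Bool

/-- `S` has verification status `j` in the AF `F`. -/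
def hasStatus {α : Type u} (F : AF α) (S : Set α) (j : VStatus) : Prop :=
  cond j.2 (extOf j.1 F S) (¬ extOf j.1 F S)

/-- `S` is stable-`j` w.r.t. `I`. -/
def IAF.stableJ {α : Type u} (I : IAF α) (S : Set α) (j : VStatus) : Prop :=
  ∀ F, I.IsCompletion F → hasStatus F S j

/-- `S` is stable-`σ` w.r.t. `I`. -/
def IAF.stableSem {α : Type u} (I : IAF α) (S : Set α) (σ : Sem) : Prop :=
  I.stableJ S (σ, true) ∨ I.stableJ S (σ, false)

/-- `RE⁺(I,S,j)`: uncertain elements whose addition is `j`-relevant for `S` w.r.t. `I`. -/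
def REplus {α : Type u} (I : IAF α) (S : Set α) (j : VStatus) : Set (Elem α) :=
  {e | I.isUnc e ∧ ∃ I' : IAF α, I'.PartOf I ∧ onlyUnc I' e ∧
    hasStatus (I'.addE e).cert S j ∧ ¬ hasStatus (I'.subE e).cert S j}

/-- `RE⁻(I,S,j)`: uncertain elements whose removal is `j`-relevant for `S` w.r.t. `I`. -/
def REminus {α : Type u} (I : IAF α) (S : Set α) (j : VStatus) : Set (Elem α) :=
  {e | I.isUnc e ∧ ∃ I' : IAF α, I'.PartOf I ∧ onlyUnc I' e ∧
    hasStatus (I'.subE e).cert S j ∧ ¬ hasStatus (I'.addE e).cert S j}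

/-- `e` is `σ`-irrelevant for `S` w.r.t. `I`. -/
def irrelevant {α : Type u} (I : IAF α) (S : Set α) (σ : Sem) (e : Elem α) : Prop :=
  e ∉ REplus I S (σ, true) ∧ e ∉ REminus I S (σ, true) ∧
  e ∉ REplus I S (σ, false) ∧ e ∉ REminus I S (σ, false)

/-- `PosVer_σ(I,S) = true`. -/
def PosVer {α : Type u} (σ : Sem) (I : IAF α) (S : Set α) : Prop :=
  ∃ F, I.IsCompletion F ∧ extOf σ F S

/-- `NecVer_σ(I,S) = true`. -/
def NecVer {α : Type u} (σ : Sem) (I : IAF α) (S : Set α) : Prop :=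
  ∀ F, I.IsCompletion F → extOf σ F S

/-- `SRE⁺(I,S,j)`: uncertain elements whose addition is strongly `j`-relevant. -/
def SREplus {α : Type u} (I : IAF α) (S : Set α) (j : VStatus) : Set (Elem α) :=
  {e | I.isUnc e ∧ ∀ I' : IAF α, I'.PartOf (I.subE e) → ¬ I'.stableJ S j}

/-- `SRE⁻(I,S,j)`: uncertain elements whose removal is strongly `j`-relevant. -/
def SREminus {α : Type u} (I : IAF α) (S : Set α) (j : VStatus) : Set (Elem α) :=
  {e | I.isUnc e ∧ ∀ I' : IAF α, I'.PartOf (I.addE e) → ¬ I'.stableJ S j}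

/-- The `OutRel(I,S,(a,b))` predicate. -/
def OutRel {α : Type u} (I : IAF α) (S : Set α) (r : α × α) : Prop :=
  (I.minusI {r.2} \ {r.1}) ∩ I.simI S = ∅ ∧
  PosVer Sem.co
    ((I.addR {p | p ∈ I.Rq ∧ p.1 ∈ S ∧ p.2 ∈ I.minusI {r.2} \ {r.1}}).subR
      {p | p ∈ I.Rq ∧ p.1 ≠ r.1 ∧ p.2 = r.2}) S



section AuxStmt15

variable {α : Type u}

lemma aux_plus_ext (Aset : Set α) (Rc : Set (α × α)) (w : α)
    (hR : Rc ⊆ Aset ×ˢ Aset) (hw : w ∉ Aset) (T : Set α) (hT : T ⊆ Aset) :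
    (AF.mk (Aset ∪ {w}) (Rc ∪ {(w, w)})).plusSet T = (AF.mk Aset Rc).plusSet T := by
  ext a
  simp only [AF.plusSet, Set.mem_setOf_eq]
  constructor
  · rintro ⟨ha, b, hb, hatt⟩
    rcases hatt with h | h
    · exact ⟨(hR h).2, b, hb, h⟩
    · exfalso
      have hb' : b = w := (Prod.ext_iff.mp h).1
      exact hw (hb' ▸ hT hb)
  · rintro ⟨ha, b, hb, hatt⟩
    exact ⟨Or.inl ha, b, hb, Or.inl hatt⟩

lemma aux_ad_iff (Aset : Set α) (Rc : Set (α × α)) (w : α)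
    (hR : Rc ⊆ Aset ×ˢ Aset) (hw : w ∉ Aset) (T : Set α) (hT : T ⊆ Aset) :
    (AF.mk Aset Rc).isAd T ↔ (AF.mk (Aset ∪ {w}) (Rc ∪ {(w, w)})).isAd T := by
  have hp := aux_plus_ext Aset Rc w hR hw T hT
  unfold AF.isAd AF.confFree AF.Γ AF.defends
  rw [hp]
  constructor
  · rintro ⟨h1, h2, h3⟩
    refine ⟨hT.trans Set.subset_union_left, h2, ?_⟩
    intro a ha
    obtain ⟨haA, hd⟩ := h3 ha
    refine ⟨Or.inl haA, ?_⟩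
    intro b hb
    rcases hb with h | h
    · exact hd b h
    · exfalso
      have haw : a = w := (Prod.ext_iff.mp h).2
      exact hw (haw ▸ hT ha)
  · rintro ⟨h1, h2, h3⟩
    refine ⟨hT, h2, ?_⟩
    intro a ha
    obtain ⟨haA, hd⟩ := h3 ha
    exact ⟨hT ha, fun b hb => hd b (Or.inl hb)⟩

lemma aux_ad_sub (Aset : Set α) (Rc : Set (α × α)) (w : α) (T : Set α)
    (h : (AF.mk (Aset ∪ {w}) (Rc ∪ {(w, w)})).isAd T) : T ⊆ Aset := by
  intro a ha
  rcases h.1 ha with h' | h'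
  · exact h'
  · exfalso
    have hwT : w ∈ T := by rwa [Set.mem_singleton_iff.mp h'] at ha
    have hmem : w ∈ T ∩ (AF.mk (Aset ∪ {w}) (Rc ∪ {(w, w)})).plusSet T :=
      ⟨hwT, Set.mem_union_right _ rfl, w, hwT, Set.mem_union_right _ rfl⟩
    rw [h.2.1] at hmem
    exact hmem

lemma aux_pr_iff (Aset : Set α) (Rc : Set (α × α)) (S : Set α) (w : α)
    (hR : Rc ⊆ Aset ×ˢ Aset) (hS : S ⊆ Aset) (hw : w ∉ Aset) :
    (AF.mk Aset Rc).isPr S ↔ (AF.mk (Aset ∪ {w}) (Rc ∪ {(w, w)})).isPr S := by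
  constructor
  · rintro ⟨h1, h2⟩
    refine ⟨(aux_ad_iff Aset Rc w hR hw S hS).mp h1, ?_⟩
    intro T hT hST
    have hTA := aux_ad_sub Aset Rc w T hT
    exact h2 T ((aux_ad_iff Aset Rc w hR hw T hTA).mpr hT) hST
  · rintro ⟨h1, h2⟩
    refine ⟨(aux_ad_iff Aset Rc w hR hw S hS).mpr h1, ?_⟩
    intro T hT hST
    have hTA : T ⊆ Aset := hT.1
    exact h2 T ((aux_ad_iff Aset Rc w hR hw T hTA).mp hT) hST

lemma aux_form_completion (Aset : Set α) (R Rq Rc : Set (α × α))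
    (hRc : Rc ⊆ Aset ×ˢ Aset) (h1 : R ⊆ Rc) (h2 : Rc ⊆ R ∪ Rq) :
    IAF.IsCompletion ⟨Aset, ∅, R, Rq⟩ (AF.mk Aset Rc) := by
  refine ⟨⟨Aset, ∅, Rc, ∅⟩, ⟨⟨by simp, by simp, by simpa using hRc, by simp⟩,
    subset_rfl, by simp, ?_, h2, subset_rfl, Set.empty_subset _⟩, ?_⟩
  · exact fun x hx => h1 hx.1
  · unfold IAF.cert
    simp only
    congr 1
    exact (Set.inter_eq_left.mpr hRc).symm

lemma aux_completion_form (Aset : Set α) (R Rq : Set (α × α))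
    (hR : R ⊆ Aset ×ˢ Aset) (F : AF α)
    (hF : IAF.IsCompletion ⟨Aset, ∅, R, Rq⟩ F) :
    ∃ Rc, R ⊆ Rc ∧ Rc ⊆ R ∪ Rq ∧ Rc ⊆ Aset ×ˢ Aset ∧ F = AF.mk Aset Rc := by
  obtain ⟨I2, ⟨hWF, hA1, hA2, hRlo, hRhi, hAq, hRq⟩, hcert⟩ := hF
  have hAeq : I2.A = Aset := subset_antisymm (by simpa using hA2) hA1
  have hAqe : I2.Aq = ∅ := Set.subset_empty_iff.mp hAq
  refine ⟨I2.R ∩ Aset ×ˢ Aset, ?_, Set.inter_subset_left.trans hRhi,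
    Set.inter_subset_right, ?_⟩
  · intro r hr
    have hmem : r ∈ R ∩ (I2.A ∪ I2.Aq) ×ˢ (I2.A ∪ I2.Aq) := by
      rw [hAeq, hAqe]
      exact ⟨hr, by simpa using hR hr⟩
    exact ⟨hRlo hmem, hR hr⟩
  · rw [hcert]
    unfold IAF.cert
    rw [hAeq]

end AuxStmt15

/-- reduction from `NecVer_pr` to strong `(pr,false)`-relevance of removal. -/
theorem stmt15 {α : Type u} (I : IAF α) (S : Set α) (w : α)
    (hWF : I.WF) (hAt : I.Aq = ∅) (hS : S ⊆ I.A)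
    (hw : w ∉ I.A)
    (I' : IAF α)
    (hI' : I' = ⟨I.A, {w}, I.R, I.Rq ∪ {(w, w)}⟩) :
    NecVer Sem.pr I S ↔
      Elem.att (w, w) ∈ SREminus (I'.addA {w}) S (Sem.pr, false) := by
  subst hI'
  obtain ⟨hAA, hRR, hRsub, hRqsub⟩ := hWF
  have hRA : I.R ⊆ I.A ×ˢ I.A := by rw [hAt] at hRsub; simpa using hRsub
  have hRqA : I.Rq ⊆ I.A ×ˢ I.A := by rw [hAt] at hRqsub; simpa using hRqsub
  have hwwR : (w, w) ∉ I.Rq := fun h => hw (hRqA h).1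
  have hwwRR : (w, w) ∉ I.R := fun h => hw (hRA h).1
  have hIeq : I = (⟨I.A, ∅, I.R, I.Rq⟩ : IAF α) := by rw [← hAt]
  have hAwR : I.R ∪ {(w, w)} ⊆ (I.A ∪ {w}) ×ˢ (I.A ∪ {w}) := by
    rintro r (h | h)
    · exact ⟨Or.inl (hRA h).1, Or.inl (hRA h).2⟩
    · cases h; exact ⟨Or.inr rfl, Or.inr rfl⟩
  have e2 : (I.Rq ∪ {(w, w)}) \ {(w, w)} = I.Rq := by
    rw [Set.union_diff_cancel_right]
    rintro x ⟨h1, h2⟩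
    cases h2
    exact (hwwR h1).elim
  have hK : ((⟨I.A, {w}, I.R, I.Rq ∪ {(w, w)}⟩ : IAF α).addA {w}).addE (Elem.att (w, w))
      = (⟨I.A ∪ {w}, ∅, I.R ∪ {(w, w)}, I.Rq⟩ : IAF α) := by
    simp only [IAF.addE, IAF.addA, IAF.addR, Set.diff_self, e2]
  constructor
  · intro hNec
    refine ⟨Set.mem_union_right _ rfl, ?_⟩
    intro I'' hPart hStable
    rw [hK] at hPart
    obtain ⟨⟨hd1, hd2, hr1, hr2⟩, hA1, hA2, hRlo, hRhi, hAq, hRq⟩ := hPart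
    have hAqe : I''.Aq = ∅ := Set.subset_empty_iff.mp hAq
    have hAe : I''.A = I.A ∪ {w} := subset_antisymm (by simpa using hA2) hA1
    have hRlo' : I.R ∪ {(w, w)} ⊆ I''.R := by
      intro r hr
      apply hRlo
      refine ⟨hr, ?_⟩
      rw [hAe, hAqe]
      simpa using hAwR hr
    have hRA'' : I''.R ⊆ (I.A ∪ {w}) ×ˢ (I.A ∪ {w}) := by
      rw [← hAe]
      rw [hAqe] at hr1
      simpa using hr1
    have hI''eq : I'' = (⟨I.A ∪ {w}, ∅, I''.R, I''.Rq⟩ : IAF α) := by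
      rw [← hAe, ← hAqe]
    have hcompF0 : IAF.IsCompletion I'' (AF.mk (I.A ∪ {w}) I''.R) := by
      rw [hI''eq]
      exact aux_form_completion _ I''.R I''.Rq I''.R hRA'' subset_rfl Set.subset_union_left
    -- construct the completion of I without w
    have hsub1 : I.R ⊆ I''.R \ {(w, w)} := by
      intro r hr
      refine ⟨hRlo' (Or.inl hr), ?_⟩
      intro he
      cases he
      exact hwwRR hr
    have hsub2 : I''.R \ {(w, w)} ⊆ I.R ∪ I.Rq := by
      rintro r ⟨hr, hne⟩
      rcases hRhi hr with (h | h) | h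
      · exact Or.inl h
      · exact (hne h).elim
      · exact Or.inr h
    have hsub3 : I''.R \ {(w, w)} ⊆ I.A ×ˢ I.A := by
      intro r hr
      rcases hsub2 hr with h | h
      · exact hRA h
      · exact hRqA h
    have hcompI : IAF.IsCompletion I (AF.mk I.A (I''.R \ {(w, w)})) := by
      rw [hIeq]
      exact aux_form_completion _ I.R I.Rq _ hsub3 hsub1 hsub2
    have hPr : (AF.mk I.A (I''.R \ {(w, w)})).isPr S := hNec _ hcompI
    have hPrw : (AF.mk (I.A ∪ {w}) ((I''.R \ {(w, w)}) ∪ {(w, w)})).isPr S :=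
      (aux_pr_iff I.A _ S w hsub3 hS hw).mp hPr
    have heq : (I''.R \ {(w, w)}) ∪ {(w, w)} = I''.R :=
      Set.diff_union_of_subset (Set.singleton_subset_iff.mpr (hRlo' (Or.inr rfl)))
    rw [heq] at hPrw
    exact hStable _ hcompF0 hPrw
  · rintro ⟨-, hSRE⟩ F hF
    rw [hK] at hSRE
    rw [hIeq] at hF
    obtain ⟨Rc, h1, h2, h3, rfl⟩ := aux_completion_form I.A I.R I.Rq hRA F hF
    have hRcw : Rc ∪ {(w, w)} ⊆ (I.A ∪ {w}) ×ˢ (I.A ∪ {w}) := by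
      rintro r (h | h)
      · exact ⟨Or.inl (h3 h).1, Or.inl (h3 h).2⟩
      · cases h; exact ⟨Or.inr rfl, Or.inr rfl⟩
    have hPart : IAF.PartOf (⟨I.A ∪ {w}, ∅, Rc ∪ {(w, w)}, ∅⟩ : IAF α)
        (⟨I.A ∪ {w}, ∅, I.R ∪ {(w, w)}, I.Rq⟩ : IAF α) := by
      refine ⟨⟨by simp, by simp, by simpa using hRcw, by simp⟩,
        subset_rfl, by simp, ?_, ?_, subset_rfl, Set.empty_subset _⟩
      · rintro r ⟨(hr | hr), -⟩
        · exact Or.inl (h1 hr)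
        · exact Or.inr hr
      · rintro r (hr | hr)
        · rcases h2 hr with h | h
          · exact Or.inl (Or.inl h)
          · exact Or.inr h
        · exact Or.inl (Or.inr hr)
    have hns := hSRE _ hPart
    rw [IAF.stableJ] at hns
    push_neg at hns
    obtain ⟨G, hGcomp, hGst⟩ := hns
    obtain ⟨Rc', h1', h2', h3', rfl⟩ :=
      aux_completion_form (I.A ∪ {w}) (Rc ∪ {(w, w)}) ∅ hRcw G hGcomp
    have hRceq : Rc' = Rc ∪ {(w, w)} := subset_antisymm (by simpa using h2') h1'
    have hPrw : (AF.mk (I.A ∪ {w}) Rc').isPr S := not_not.mp hGst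
    rw [hRceq] at hPrw
    exact (aux_pr_iff I.A Rc S w h3 hS hw).mpr hPrw
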